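/- Let R, S, T be rectangles in ℝ^n of the same type such that R and T are (4n−2)ε-significant and α(R) ≤ α(T). If there are nonzero morphisms χ: 𝕀^R → 𝕀^S(ε) and ψ: 𝕀^S → 𝕀^T(ε), then ψ(ε) ∘ χ: 𝕀^R → 𝕀^T(2ε) is nonzero. -/

import Mathlib

open CategoryTheory Classical

noncomputable section

/-- Convexity of a subset of a poset. -/
def IsConvex {P : Type} [Preorder P] (I : Set P) : Prop :=
  ∀ ⦃p q r : P⦄, p ∈ I → q ∈ I → p ≤ r → r ≤ q → r ∈ I

/-- Zigzag connectivity within a subset. -/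
def ZigzagConnected {P : Type} [Preorder P] (I : Set P) : Prop :=
  ∀ p ∈ I, ∀ q ∈ I,
    Relation.ReflTransGen (fun a b => a ∈ I ∧ b ∈ I ∧ (a ≤ b ∨ b ≤ a)) p q

/-- An interval in a poset: nonempty, convex, and zigzag connected. -/
def IsIntervalSet {P : Type} [Preorder P] (I : Set P) : Prop :=
  I.Nonempty ∧ IsConvex I ∧ ZigzagConnected I

open scoped Classical in
/-- The pointwise vector space of the interval module: `k` (as `⊤`) on `I`, `0` off `I`. -/
def objSub (k : Type) [Field k] {P : Type} [Preorder P] (I : Set P) (p : P) : Submodule k k :=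
  if p ∈ I then ⊤ else ⊥

open scoped Classical in
/-- The interval persistence module `𝕀^I` as a functor `P ⥤ ModuleCat k`. -/
def intervalModule (k : Type) [Field k] {P : Type} [Preorder P] (I : Set P)
    (hI : IsConvex I) : P ⥤ ModuleCat.{0} k where
  obj p := ModuleCat.of k (objSub k I p)
  map {p q} h :=
    if hpq : p ∈ I ∧ q ∈ I then
      ModuleCat.ofHom
        { toFun := fun x => ⟨(x : k), by simp [objSub, hpq.2]⟩
          map_add' := by intros; rfl
          map_smul' := by intros; rfl }
    else 0
  map_id := by
    intro p
    try dsimp only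
    by_cases hp : p ∈ I
    · rw [dif_pos ⟨hp, hp⟩]; rfl
    · rw [dif_neg (fun h => hp h.1)]
      haveI : Subsingleton ↥(objSub k I p) := by
        rw [objSub, if_neg hp]; infer_instance
      apply ModuleCat.hom_ext; apply LinearMap.ext; intro x
      exact this.allEq _ _
  map_comp := by
    intro p q r hpq hqr
    try dsimp only
    by_cases hpr : p ∈ I ∧ r ∈ I
    · have hq : q ∈ I := hI hpr.1 hpr.2 (leOfHom hpq) (leOfHom hqr)
      rw [dif_pos hpr, dif_pos ⟨hpr.1, hq⟩, dif_pos ⟨hq, hpr.2⟩]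
      rfl
    · rw [dif_neg hpr]
      by_cases hp : p ∈ I
      · have hr : r ∉ I := fun hr => hpr ⟨hp, hr⟩
        haveI : Subsingleton ↥(objSub k I r) := by
          rw [objSub, if_neg hr]; infer_instance
        apply ModuleCat.hom_ext; apply LinearMap.ext; intro x
        exact this.allEq _ _
      · haveI : Subsingleton ↥(objSub k I p) := by
          rw [objSub, if_neg hp]; infer_instance
        apply ModuleCat.hom_ext; apply LinearMap.ext; intro x
        have hx : x = 0 := this.allEq x 0
        rw [hx]
        simp

open DirectSum

open scoped ENNReal

/-- Direct sum of a family of persistence modules. -/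
def dsumF (k : Type) [Field k] {P : Type} [Preorder P] {ι : Type}
    (F : ι → P ⥤ ModuleCat.{0} k) : P ⥤ ModuleCat.{0} k where
  obj p := ModuleCat.of k (⨁ i, ((F i).obj p : Type))
  map {p q} h := ModuleCat.ofHom
    (DFinsupp.mapRange.linearMap (fun i => (((F i).map h).hom : (F i).obj p →ₗ[k] (F i).obj q)))
  map_id := by
    intro p
    try dsimp only
    simp only [CategoryTheory.Functor.map_id, ModuleCat.hom_id]
    apply ModuleCat.hom_ext
    exact DFinsupp.mapRange.linearMap_id
  map_comp := by
    intro p q r hpq hqr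
    try dsimp only
    simp only [CategoryTheory.Functor.map_comp]
    apply ModuleCat.hom_ext; apply LinearMap.ext; intro x
    apply DFinsupp.ext; intro i
    rfl

/-- Use the preorder category structure on `Fin n → ℝ`. -/
instance RnCat (n : ℕ) : Category (Fin n → ℝ) := Preorder.smallCategory _

/-- Diagonal translation by `ε` as an endofunctor of the poset `Fin n → ℝ`. -/
def transl (n : ℕ) (ε : ℝ) : (Fin n → ℝ) ⥤ (Fin n → ℝ) :=
  Monotone.functor (f := fun p i => p i + ε)
    (fun _ _ hab i => add_le_add_left (hab i) ε)

/-- `M` and `N` are `ε`-interleaved `ℝⁿ`-persistence modules. -/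
def Interleaved (k : Type) [Field k] {n : ℕ} (ε : ℝ)
    (M N : (Fin n → ℝ) ⥤ ModuleCat.{0} k) : Prop :=
  ∃ _hε : 0 ≤ ε, ∃ (f : M ⟶ transl n ε ⋙ N) (g : N ⟶ transl n ε ⋙ M),
    (∀ p : Fin n → ℝ, f.app p ≫ g.app (fun i => p i + ε) =
      M.map (homOfLE (show p ≤ fun i => p i + ε + ε from
        fun i => by show p i ≤ p i + ε + ε; linarith))) ∧
    (∀ p : Fin n → ℝ, g.app p ≫ f.app (fun i => p i + ε) =
      N.map (homOfLE (show p ≤ fun i => p i + ε + ε from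
        fun i => by show p i ≤ p i + ε + ε; linarith)))

/-- An interval `I ⊆ ℝⁿ` is `δ`-trivial: it contains no pair `p ≤ p + δ`. -/
def SetTrivial {n : ℕ} (δ : ℝ) (I : Set (Fin n → ℝ)) : Prop :=
  ¬ ∃ p, p ∈ I ∧ (fun i => p i + δ) ∈ I

/-- Barcode data: an indexed family of nonempty convex intervals in `ℝⁿ`. -/
structure Barcode (n : ℕ) where
  ι : Type
  I : ι → Set (Fin n → ℝ)
  nonempty : ∀ i, (I i).Nonempty
  conv : ∀ i, IsConvex (I i)

/-- The interval decomposable module associated to barcode data. -/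
def Barcode.module (k : Type) [Field k] {n : ℕ} (B : Barcode n) :
    (Fin n → ℝ) ⥤ ModuleCat.{0} k :=
  dsumF k fun i => intervalModule k (B.I i) (B.conv i)

/-- `B` is pointwise finite dimensional. -/
def Barcode.pfd (k : Type) [Field k] {n : ℕ} (B : Barcode n) : Prop :=
  ∀ p : Fin n → ℝ, Module.Finite k ((B.module k).obj p)

/-- An `ε`-matching between two barcodes: a partial bijection such that unmatched
intervals are `2ε`-trivial and matched intervals are `ε`-interleaved. -/
def Matched (k : Type) [Field k] {n : ℕ} (ε : ℝ) (B C : Barcode n) : Prop :=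
  0 ≤ ε ∧ ∃ (A : Set B.ι) (A' : Set C.ι) (e : A ≃ A'),
    (∀ i ∉ A, SetTrivial (2 * ε) (B.I i)) ∧
    (∀ j ∉ A', SetTrivial (2 * ε) (C.I j)) ∧
    (∀ i : A, Interleaved k ε
      (intervalModule k (B.I i) (B.conv i))
      (intervalModule k (C.I (e i)) (C.conv (e i))))

/-- The interleaving distance, valued in `ℝ≥0∞`. -/
def dInt (k : Type) [Field k] {n : ℕ} (M N : (Fin n → ℝ) ⥤ ModuleCat.{0} k) : ℝ≥0∞ :=
  ⨅ (ε : ℝ) (_ : Interleaved k ε M N), ENNReal.ofReal ε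

/-- The bottleneck distance between barcodes, valued in `ℝ≥0∞`. -/
def dBot (k : Type) [Field k] {n : ℕ} (B C : Barcode n) : ℝ≥0∞ :=
  ⨅ (ε : ℝ) (_ : Matched k ε B C), ENNReal.ofReal ε

/-- Rectangles: products of real intervals. -/
def rectSet {n : ℕ} (R : Fin n → Set ℝ) : Set (Fin n → ℝ) := {x | ∀ i, x i ∈ R i}

theorem rectSet_convex {n : ℕ} (R : Fin n → Set ℝ) (h : ∀ i, (R i).OrdConnected) :
    IsConvex (rectSet R) := by
  intro p q r hp hq hpr hrq i
  exact (h i).out (hp i) (hq i) ⟨hpr i, hrq i⟩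

/-- A barcode consists of rectangles. -/
def IsRectBarcode {n : ℕ} (B : Barcode n) : Prop :=
  ∀ i, ∃ R : Fin n → Set ℝ,
    (∀ j, (R j).Nonempty ∧ (R j).OrdConnected) ∧ B.I i = rectSet R

/-- Decorated numbers: an extended real endpoint with a decoration,
`false` = `−` (closed side), `true` = `+` (open side), ordered lexicographically
so that `a⁻ < a⁺` and `a^* < b^*` whenever `a < b`. -/
def DecNum := Lex (EReal × Bool)

noncomputable instance : LinearOrder DecNum :=
  inferInstanceAs (LinearOrder (Lex (EReal × Bool)))

open scoped Classical in
/-- The decorated lower endpoint of a subset of `ℝ`. -/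
noncomputable def lowDec (I : Set ℝ) : DecNum :=
  toLex (sInf ((↑) '' I : Set EReal),
    if sInf ((↑) '' I : Set EReal) ∈ ((↑) '' I : Set EReal) then false else true)

open scoped Classical in
/-- The decorated upper endpoint of a subset of `ℝ`. -/
noncomputable def highDec (I : Set ℝ) : DecNum :=
  toLex (sSup ((↑) '' I : Set EReal),
    if sSup ((↑) '' I : Set EReal) ∈ ((↑) '' I : Set EReal) then true else false)

/-- The decorated point `min_R` of a rectangle with factors `R`. -/
noncomputable def minDec {n : ℕ} (R : Fin n → Set ℝ) : Fin n → DecNum :=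
  fun i => lowDec (R i)

/-- The decorated point `max_R` of a rectangle with factors `R`. -/
noncomputable def maxDec {n : ℕ} (R : Fin n → Set ℝ) : Fin n → DecNum :=
  fun i => highDec (R i)

/-- `u` of a decorated number: the underlying real number, `0` for `±∞`. -/
noncomputable def uDec (d : DecNum) : ℝ := (ofLex d).1.toReal

/-- `α` of a rectangle with factors `R`. -/
noncomputable def alphaR {n : ℕ} (R : Fin n → Set ℝ) : ℝ :=
  (∑ i, uDec (minDec R i)) + (∑ i, uDec (maxDec R i))

open scoped Classical in
/-- `P` of a rectangle: the number of endpoint decorations equal to `+`. -/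
noncomputable def PR {n : ℕ} (R : Fin n → Set ℝ) : ℕ :=
  (Finset.univ.filter fun i => (ofLex (minDec R i)).2 = true).card +
    (Finset.univ.filter fun i => (ofLex (maxDec R i)).2 = true).card

/-- The preorder `≤_α` on rectangles. -/
noncomputable def leAlpha {n : ℕ} (R S : Fin n → Set ℝ) : Prop :=
  alphaR R < alphaR S ∨ (alphaR R = alphaR S ∧ PR R ≤ PR S)

/-- Two rectangles are of the same type if all coordinatewise set differences
are bounded. -/
def SameType {n : ℕ} (R S : Fin n → Set ℝ) : Prop :=
  ∀ i, Bornology.IsBounded (R i \ S i) ∧ Bornology.IsBounded (S i \ R i)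

/-- `I ⊆ ℝⁿ` is `δ`-significant. -/
def SetSignificant {n : ℕ} (δ : ℝ) (I : Set (Fin n → ℝ)) : Prop :=
  ∃ p, p ∈ I ∧ (fun i => p i + δ) ∈ I

/-- Rectangle factor data: each factor is a nonempty ordered-connected real interval. -/
def IsRectFactors {n : ℕ} (R : Fin n → Set ℝ) : Prop :=
  ∀ i, (R i).Nonempty ∧ (R i).OrdConnected

/-!
On the intersection of two rectangles, a morphism between their interval modules is
multiplication by a single scalar, because the intersection is closed under coordinatewise
minima. A nonzero morphism `𝕀^R ⟶ 𝕀^S(ε)` therefore makes `R ∩ (S - ε)` upward closed in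
`S - ε` and downward closed in `R`, coordinate by coordinate, and chaining this with `ψ` puts
each endpoint of `T i` at most `2ε` above the corresponding endpoint of `R i`.

If `R`, `S - ε` and `T - 2ε` share a point, both scalars are nonzero there, and so is the
composite. Otherwise the triple intersection is empty in some coordinate `i`, which forces
every point of `T i` below every point of `R i` plus `2ε`. Together with the
`δ = (4n-2)ε`-significance of `R i` and `T i`, the endpoint sum of `T i` then falls short of
that of `R i` plus `4ε` by more than `2δ`, and summing over the coordinates gives
`α(T) < α(R) - (4n-4)ε ≤ α(R)`.
-/

open CategoryTheory

section LinearAlgebra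

variable {k : Type} [Field k]

lemma LinearMap.comp_ne_zero_of_submodule_self {U W : Type} [AddCommGroup U] [Module k U]
    [AddCommGroup W] [Module k W] {V : Submodule k k} {f : U →ₗ[k] V} {g : V →ₗ[k] W}
    (hf : f ≠ 0) (hg : g ≠ 0) : g ∘ₗ f ≠ 0 := by
  obtain ⟨u, hu⟩ : ∃ u, f u ≠ 0 := not_forall.mp fun h => hf (LinearMap.ext h)
  obtain ⟨v, hv⟩ : ∃ v, g v ≠ 0 := not_forall.mp fun h => hg (LinearMap.ext h)
  have hu' : (f u : k) ≠ 0 := fun h => hu (Subtype.ext h)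
  have hvu : ((v : k) / f u) • f u = v := Subtype.ext (div_mul_cancel₀ (v : k) hu')
  intro hgf
  apply hv
  rw [← hvu, ← map_smul, ← LinearMap.comp_apply, hgf, LinearMap.zero_apply]

lemma ModuleCat.comp_ne_zero_of_submodule_self {X Y : ModuleCat.{0} k} {V : Submodule k k}
    {f : X ⟶ ModuleCat.of k V} {g : ModuleCat.of k V ⟶ Y} (hf : f ≠ 0) (hg : g ≠ 0) :
    f ≫ g ≠ 0 := by
  intro hfg
  refine LinearMap.comp_ne_zero_of_submodule_self (f := f.hom) (g := g.hom)
    (fun h => hf (ModuleCat.hom_ext h)) (fun h => hg (ModuleCat.hom_ext h)) ?_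
  rw [← ModuleCat.hom_comp, hfg, ModuleCat.hom_zero]

end LinearAlgebra

lemma IsConvex.preimage {P Q : Type} [Preorder P] [Preorder Q] {J : Set Q} (hJ : IsConvex J)
    {f : P → Q} (hf : Monotone f) : IsConvex (f ⁻¹' J) :=
  fun _ _ _ hp hq hpr hrq => hJ hp hq (hf hpr) (hf hrq)

/-- The relative position of `I` and `J` forced by a nonzero morphism `𝕀^I ⟶ 𝕀^J` when
`I ∩ J` is codirected. -/
def IsHomPair {P : Type} [Preorder P] (I J : Set P) : Prop :=
  (I ∩ J).Nonempty ∧ (∀ ⦃p q⦄, p ≤ q → p ∈ I ∩ J → q ∈ J → q ∈ I) ∧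
    (∀ ⦃p q⦄, p ≤ q → q ∈ I ∩ J → p ∈ I → p ∈ J)

section IntervalModule

variable {k : Type} [Field k] {P : Type} [Preorder P] {I J : Set P}
  {hI : IsConvex I} {hJ : IsConvex J}

lemma intervalModule_obj_isZero {p : P} (hp : p ∉ I) :
    Limits.IsZero ((intervalModule k I hI).obj p) := by
  have : Subsingleton (objSub k I p) := by
    rw [objSub, if_neg hp]
    infer_instance
  exact @ModuleCat.isZero_of_subsingleton k _ ((intervalModule k I hI).obj p) this

lemma intervalModule_map_eq_zero {p q : P} (f : p ⟶ q) (h : ¬(p ∈ I ∧ q ∈ I)) :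
    (intervalModule k I hI).map f = 0 :=
  dif_neg h

lemma intervalModule_map_isIso {p q : P} (f : p ⟶ q) (hp : p ∈ I) (hq : q ∈ I) :
    IsIso ((intervalModule k I hI).map f) := by
  rw [ConcreteCategory.isIso_iff_bijective]
  change Function.Bijective (fun x => (intervalModule k I hI).map f x)
  simp only [intervalModule, dif_pos (And.intro hp hq)]
  refine ⟨fun x y hxy => Subtype.ext (congrArg Subtype.val hxy :), fun y => ⟨⟨y, ?_⟩, rfl⟩⟩
  simp [objSub, hp]

variable (χ : intervalModule k I hI ⟶ intervalModule k J hJ)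

lemma mem_inter_of_app_ne_zero {p : P} (h : χ.app p ≠ 0) : p ∈ I ∩ J := by
  by_contra hp
  rcases not_and_or.mp hp with hpI | hpJ
  · exact h ((intervalModule_obj_isZero hpI).eq_of_src _ _)
  · exact h ((intervalModule_obj_isZero hpJ).eq_of_tgt _ _)

lemma app_eq_zero_iff_of_le {p q : P} (f : p ⟶ q) (hp : p ∈ I ∩ J) (hq : q ∈ I ∩ J) :
    χ.app p = 0 ↔ χ.app q = 0 := by
  have := intervalModule_map_isIso (k := k) (hI := hI) f hp.1 hq.1
  have := intervalModule_map_isIso (k := k) (hI := hJ) f hp.2 hq.2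
  rw [← Preadditive.IsIso.comp_right_eq_zero _ ((intervalModule k J hJ).map f),
    ← χ.naturality, Preadditive.IsIso.comp_left_eq_zero]

lemma mem_source_of_le_of_app_ne_zero {p q : P} (f : p ⟶ q) (h : χ.app p ≠ 0)
    (hq : q ∈ J) : q ∈ I := by
  have hp := mem_inter_of_app_ne_zero χ h
  by_contra hqI
  have := intervalModule_map_isIso (k := k) (hI := hJ) f hp.2 hq
  apply h
  rw [← Preadditive.IsIso.comp_right_eq_zero _ ((intervalModule k J hJ).map f),
    ← χ.naturality, intervalModule_map_eq_zero f (fun h => hqI h.2), Limits.zero_comp]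

lemma mem_target_of_le_of_app_ne_zero {p q : P} (f : p ⟶ q) (h : χ.app q ≠ 0)
    (hp : p ∈ I) : p ∈ J := by
  have hq := mem_inter_of_app_ne_zero χ h
  by_contra hpJ
  have := intervalModule_map_isIso (k := k) (hI := hI) f hp hq.1
  apply h
  rw [← Preadditive.IsIso.comp_left_eq_zero ((intervalModule k I hI).map f), χ.naturality,
    intervalModule_map_eq_zero f (fun h => hpJ h.1), Limits.comp_zero]

variable {χ}

lemma exists_app_ne_zero (hχ : χ ≠ 0) : ∃ p, χ.app p ≠ 0 := by
  by_contra! h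
  exact hχ (NatTrans.ext (funext h))

lemma app_ne_zero_of_codirectedOn (hdir : DirectedOn (· ≥ ·) (I ∩ J)) (hχ : χ ≠ 0)
    {p : P} (hp : p ∈ I ∩ J) : χ.app p ≠ 0 := by
  obtain ⟨p₀, hp₀⟩ := exists_app_ne_zero hχ
  have hp₀IJ := mem_inter_of_app_ne_zero χ hp₀
  obtain ⟨m, hm, hmp, hmp₀⟩ := hdir p hp p₀ hp₀IJ
  rwa [ne_eq, ← app_eq_zero_iff_of_le χ (homOfLE hmp) hm hp,
    app_eq_zero_iff_of_le χ (homOfLE hmp₀) hm hp₀IJ]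

lemma isHomPair_of_codirectedOn (hdir : DirectedOn (· ≥ ·) (I ∩ J)) (hχ : χ ≠ 0) :
    IsHomPair I J := by
  obtain ⟨p₀, hp₀⟩ := exists_app_ne_zero hχ
  refine ⟨⟨p₀, mem_inter_of_app_ne_zero χ hp₀⟩, fun p q hpq hp hq => ?_,
    fun p q hpq hq hp => ?_⟩
  · exact mem_source_of_le_of_app_ne_zero χ (homOfLE hpq)
      (app_ne_zero_of_codirectedOn hdir hχ hp) hq
  · exact mem_target_of_le_of_app_ne_zero χ (homOfLE hpq)
      (app_ne_zero_of_codirectedOn hdir hχ hq) hp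

end IntervalModule

lemma IsHomPair.eval {ι : Type} {α : ι → Type} [∀ i, Preorder (α i)] {s t : ∀ i, Set (α i)}
    (h : IsHomPair (Set.univ.pi s) (Set.univ.pi t)) (i : ι) : IsHomPair (s i) (t i) := by
  classical
  obtain ⟨⟨a, has, hat⟩, hup, hdown⟩ := h
  have hs {x} (hx : x ∈ s i) : Function.update a i x ∈ Set.univ.pi s :=
    (Set.update_mem_pi_iff_of_mem has).2 fun _ => hx
  have ht {x} (hx : x ∈ t i) : Function.update a i x ∈ Set.univ.pi t :=
    (Set.update_mem_pi_iff_of_mem hat).2 fun _ => hx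
  refine ⟨⟨a i, has i trivial, hat i trivial⟩, fun x y hxy hx hy => ?_,
    fun x y hxy hy hx => ?_⟩
  · simpa using hup (update_le_update_iff'.2 hxy) ⟨hs hx.1, ht hx.2⟩ (ht hy) i trivial
  · simpa using hdown (update_le_update_iff'.2 hxy) ⟨hs hy.1, ht hy.2⟩ (hs hx) i trivial

section LinearOrder

variable {α : Type} [LinearOrder α] {A B : Set α}

lemma IsHomPair.exists_le (h : IsHomPair A B) {x : α} (hx : x ∈ A) :
    ∃ y ∈ A ∩ B, y ≤ x := by
  obtain ⟨⟨a, ha⟩, -, hdown⟩ := h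
  have hmin : min x a ∈ A := by
    rcases min_choice x a with h | h <;> simp only [h, hx, ha.1]
  exact ⟨min x a, ⟨hmin, hdown (min_le_right x a) ha hmin⟩, min_le_left x a⟩

lemma IsHomPair.exists_ge (h : IsHomPair A B) {y : α} (hy : y ∈ B) :
    ∃ x ∈ A ∩ B, y ≤ x := by
  obtain ⟨⟨a, ha⟩, hup, -⟩ := h
  have hmax : max y a ∈ B := by
    rcases max_choice y a with h | h <;> simp only [h, hy, ha.2]
  exact ⟨max y a, ⟨hup (le_max_right y a) ha hmax, hmax⟩, le_max_left y a⟩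

end LinearOrder

section Chain

variable {ε : ℝ} {A B C : Set ℝ}

lemma exists_le_add_of_isHomPair (hAB : IsHomPair A ((· + ε) ⁻¹' B))
    (hBC : IsHomPair B ((· + ε) ⁻¹' C)) {x : ℝ} (hx : x ∈ A) :
    ∃ c ∈ C, c ≤ x + 2 * ε := by
  obtain ⟨y, ⟨-, hyB⟩, hyx⟩ := hAB.exists_le hx
  obtain ⟨z, ⟨-, hzC⟩, hzy⟩ := hBC.exists_le hyB
  exact ⟨z + ε, hzC, by linarith⟩

lemma exists_ge_sub_of_isHomPair (hAB : IsHomPair A ((· + ε) ⁻¹' B))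
    (hBC : IsHomPair B ((· + ε) ⁻¹' C)) {c : ℝ} (hc : c ∈ C) :
    ∃ x ∈ A, c ≤ x + 2 * ε := by
  obtain ⟨z, ⟨hzB, -⟩, hz⟩ := hBC.exists_ge (y := c - ε) (by simpa using hc)
  obtain ⟨x, ⟨hxA, -⟩, hx⟩ := hAB.exists_ge (y := z - ε) (by simpa using hzB)
  exact ⟨x, hxA, by linarith⟩

lemma lt_add_of_isHomPair (hAB : IsHomPair A ((· + ε) ⁻¹' B))
    (hBC : IsHomPair B ((· + ε) ⁻¹' C)) (hC : C.OrdConnected)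
    (hABC : ¬∃ x ∈ A, x + ε ∈ B ∧ x + ε + ε ∈ C) {c x : ℝ} (hc : c ∈ C) (hx : x ∈ A) :
    c < x + 2 * ε := by
  obtain ⟨y, ⟨hyA, hyB⟩, hyx⟩ := hAB.exists_le hx
  obtain ⟨z, ⟨-, hzC⟩, hzy⟩ := hBC.exists_le hyB
  by_contra! hxc
  exact hABC ⟨y, hyA, hyB, hC.out hzC hc ⟨by linarith, by linarith⟩⟩

end Chain

section Endpoints

variable {A C : Set ℝ} {d δ : ℝ}

lemma sInf_coe_image_of_bddBelow (hA : A.Nonempty) (h : BddBelow A) :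
    sInf (((↑) : ℝ → EReal) '' A) = (sInf A : ℝ) := by
  refine IsGLB.sInf_eq ⟨?_, fun b hb => ?_⟩
  · rintro _ ⟨x, hx, rfl⟩
    exact EReal.coe_le_coe_iff.2 (csInf_le h hx)
  · induction b with
    | bot => exact bot_le
    | coe b =>
      exact EReal.coe_le_coe_iff.2 (le_csInf hA fun x hx => by exact_mod_cast hb ⟨x, hx, rfl⟩)
    | top => simpa using hb ⟨_, hA.some_mem, rfl⟩

lemma sInf_coe_image_of_not_bddBelow (h : ¬BddBelow A) :
    sInf (((↑) : ℝ → EReal) '' A) = ⊥ := by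
  refine sInf_eq_bot.2 fun b hb => ?_
  induction b with
  | bot => exact absurd hb (lt_irrefl _)
  | coe b =>
    obtain ⟨x, hx, hxb⟩ := not_bddBelow_iff.1 h b
    exact ⟨x, ⟨x, hx, rfl⟩, by exact_mod_cast hxb⟩
  | top =>
    obtain ⟨x, hx, -⟩ := not_bddBelow_iff.1 h 0
    exact ⟨x, ⟨x, hx, rfl⟩, EReal.coe_lt_top x⟩

lemma sSup_coe_image_of_bddAbove (hA : A.Nonempty) (h : BddAbove A) :
    sSup (((↑) : ℝ → EReal) '' A) = (sSup A : ℝ) := by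
  refine IsLUB.sSup_eq ⟨?_, fun b hb => ?_⟩
  · rintro _ ⟨x, hx, rfl⟩
    exact EReal.coe_le_coe_iff.2 (le_csSup h hx)
  · induction b with
    | top => exact le_top
    | coe b =>
      exact EReal.coe_le_coe_iff.2 (csSup_le hA fun x hx => by exact_mod_cast hb ⟨x, hx, rfl⟩)
    | bot => simpa using hb ⟨_, hA.some_mem, rfl⟩

lemma sSup_coe_image_of_not_bddAbove (h : ¬BddAbove A) :
    sSup (((↑) : ℝ → EReal) '' A) = ⊤ := by
  refine sSup_eq_top.2 fun b hb => ?_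
  induction b with
  | top => exact absurd hb (lt_irrefl _)
  | coe b =>
    obtain ⟨x, hx, hxb⟩ := not_bddAbove_iff.1 h b
    exact ⟨x, ⟨x, hx, rfl⟩, by exact_mod_cast hxb⟩
  | bot =>
    obtain ⟨x, hx, -⟩ := not_bddAbove_iff.1 h 0
    exact ⟨x, ⟨x, hx, rfl⟩, EReal.bot_lt_coe x⟩

lemma uDec_lowDec_of_bddBelow (hA : A.Nonempty) (h : BddBelow A) :
    uDec (lowDec A) = sInf A := by
  simp only [uDec, lowDec, ofLex_toLex, sInf_coe_image_of_bddBelow hA h, EReal.toReal_coe]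

lemma uDec_lowDec_of_not_bddBelow (h : ¬BddBelow A) : uDec (lowDec A) = 0 := by
  simp only [uDec, lowDec, ofLex_toLex, sInf_coe_image_of_not_bddBelow h, EReal.toReal_bot]

lemma uDec_highDec_of_bddAbove (hA : A.Nonempty) (h : BddAbove A) :
    uDec (highDec A) = sSup A := by
  simp only [uDec, highDec, ofLex_toLex, sSup_coe_image_of_bddAbove hA h, EReal.toReal_coe]

lemma uDec_highDec_of_not_bddAbove (h : ¬BddAbove A) : uDec (highDec A) = 0 := by
  simp only [uDec, highDec, ofLex_toLex, sSup_coe_image_of_not_bddAbove h, EReal.toReal_top]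

lemma BddBelow.of_isBounded_diff (hA : BddBelow A) (h : Bornology.IsBounded (C \ A)) :
    BddBelow C :=
  (h.bddBelow.union hA).mono (Set.subset_sdiff_union C A)

lemma BddAbove.of_isBounded_diff (hA : BddAbove A) (h : Bornology.IsBounded (C \ A)) :
    BddAbove C :=
  (h.bddAbove.union hA).mono (Set.subset_sdiff_union C A)

lemma uDec_lowDec_le_add (hd : 0 ≤ d) (hA : A.Nonempty) (hCA : Bornology.IsBounded (C \ A))
    (h : ∀ x ∈ A, ∃ c ∈ C, c ≤ x + d) : uDec (lowDec C) ≤ uDec (lowDec A) + d := by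
  by_cases hAb : BddBelow A
  · have hCb := hAb.of_isBounded_diff hCA
    obtain ⟨c, hc, -⟩ := h _ hA.some_mem
    have : sInf C - d ≤ sInf A := le_csInf hA fun x hx => by
      obtain ⟨c, hc, hcx⟩ := h x hx
      linarith [csInf_le hCb hc]
    rw [uDec_lowDec_of_bddBelow ⟨c, hc⟩ hCb, uDec_lowDec_of_bddBelow hA hAb]
    linarith
  · have hCb : ¬BddBelow C := fun ⟨m, hm⟩ => hAb ⟨m - d, fun x hx => by
      obtain ⟨c, hc, hcx⟩ := h x hx
      linarith [hm hc]⟩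
    rw [uDec_lowDec_of_not_bddBelow hCb, uDec_lowDec_of_not_bddBelow hAb]
    linarith

lemma uDec_highDec_le_add (hd : 0 ≤ d) (hC : C.Nonempty) (hAC : Bornology.IsBounded (A \ C))
    (h : ∀ c ∈ C, ∃ x ∈ A, c ≤ x + d) : uDec (highDec C) ≤ uDec (highDec A) + d := by
  by_cases hAb : BddAbove A
  · have hCb : BddAbove C := ⟨sSup A + d, fun c hc => by
      obtain ⟨x, hx, hcx⟩ := h c hc
      linarith [le_csSup hAb hx]⟩
    obtain ⟨x, hx, -⟩ := h _ hC.some_mem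
    have : sSup C ≤ sSup A + d := csSup_le hC fun c hc => by
      obtain ⟨x, hx, hcx⟩ := h c hc
      linarith [le_csSup hAb hx]
    rwa [uDec_highDec_of_bddAbove hC hCb, uDec_highDec_of_bddAbove ⟨x, hx⟩ hAb]
  · have hCb : ¬BddAbove C := fun hCb => hAb (hCb.of_isBounded_diff hAC)
    rw [uDec_highDec_of_not_bddAbove hCb, uDec_highDec_of_not_bddAbove hAb]
    linarith

lemma uDec_lowDec_add_uDec_highDec_lt (hAC : Bornology.IsBounded (A \ C))
    (hCA : Bornology.IsBounded (C \ A)) (hgap : ∀ c ∈ C, ∀ x ∈ A, c < x + d)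
    {r t : ℝ} (hr : r ∈ A) (hrδ : r + δ ∈ A) (ht : t ∈ C) (htδ : t + δ ∈ C) :
    uDec (lowDec C) + uDec (highDec C) <
      uDec (lowDec A) + uDec (highDec A) + 2 * d - 2 * δ := by
  have hAb : BddBelow A := ⟨t - d, fun x hx => by linarith [hgap t ht x hx]⟩
  have hCa : BddAbove C := ⟨r + d, fun c hc => by linarith [hgap c hc r hr]⟩
  have hAa : BddAbove A := hCa.of_isBounded_diff hAC
  have hCb : BddBelow C := hAb.of_isBounded_diff hCA
  rw [uDec_lowDec_of_bddBelow ⟨t, ht⟩ hCb, uDec_highDec_of_bddAbove ⟨t, ht⟩ hCa,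
    uDec_lowDec_of_bddBelow ⟨r, hr⟩ hAb, uDec_highDec_of_bddAbove ⟨r, hr⟩ hAa]
  have hsupC : sSup C ≤ sInf A + d := csSup_le ⟨t, ht⟩ fun c hc =>
    sub_le_iff_le_add.1 (le_csInf ⟨r, hr⟩ fun x hx => by linarith [hgap c hc x hx])
  linarith [csInf_le hCb ht, hgap _ htδ r hr, le_csSup hAa hrδ]

end Endpoints

section Rectangles

variable {n : ℕ}

lemma rectSet_eq_pi (R : Fin n → Set ℝ) : rectSet R = Set.univ.pi R := by
  ext
  simp [rectSet]

lemma codirectedOn_rectSet_inter (R S : Fin n → Set ℝ) :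
    DirectedOn (· ≥ ·) (rectSet R ∩ rectSet S) := by
  rw [rectSet_eq_pi, rectSet_eq_pi]
  exact ((infClosed_pi fun i _ => LinearOrder.infClosed (R i)).inter
    (infClosed_pi fun i _ => LinearOrder.infClosed (S i))).codirectedOn

variable {k : Type} [Field k] {ε : ℝ} {R S : Fin n → Set ℝ}
  {hR : IsConvex (rectSet R)} {hS : IsConvex (rectSet S)}
  {χ : intervalModule k (rectSet R) hR ⟶ transl n ε ⋙ intervalModule k (rectSet S) hS}

/-- `𝕀^S(ε)` is, definitionally, the interval module of the rectangle `S - ε`. -/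
abbrev shiftedHom
    (χ : intervalModule k (rectSet R) hR ⟶ transl n ε ⋙ intervalModule k (rectSet S) hS) :
    intervalModule k (rectSet R) hR ⟶ intervalModule k (rectSet fun i => (· + ε) ⁻¹' S i)
      (hS.preimage (transl n ε).monotone) :=
  χ

lemma app_ne_zero_of_mem_rectSet (hχ : χ ≠ 0) {p : Fin n → ℝ} (hpR : ∀ i, p i ∈ R i)
    (hpS : ∀ i, p i + ε ∈ S i) : χ.app p ≠ 0 :=
  app_ne_zero_of_codirectedOn (χ := shiftedHom χ) (codirectedOn_rectSet_inter _ _) hχ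
    ⟨hpR, hpS⟩

lemma isHomPair_of_ne_zero (hχ : χ ≠ 0) (i : Fin n) : IsHomPair (R i) ((· + ε) ⁻¹' S i) := by
  have h := isHomPair_of_codirectedOn (χ := shiftedHom χ) (codirectedOn_rectSet_inter _ _) hχ
  rw [rectSet_eq_pi, rectSet_eq_pi] at h
  exact h.eval i

end Rectangles

lemma alphaR_eq_sum {n : ℕ} (R : Fin n → Set ℝ) :
    alphaR R = ∑ i, (uDec (lowDec (R i)) + uDec (highDec (R i))) :=
  Finset.sum_add_distrib.symm

lemma alphaR_lt_of_isHomPair {n : ℕ} {ε : ℝ} (hε : 0 ≤ ε) {R S T : Fin n → Set ℝ}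
    (hR : IsRectFactors R) (hT : IsRectFactors T) (hRT : SameType R T)
    (hRS : ∀ i, IsHomPair (R i) ((· + ε) ⁻¹' S i))
    (hST : ∀ i, IsHomPair (S i) ((· + ε) ⁻¹' T i))
    (hRsig : SetSignificant ((4 * (n : ℝ) - 2) * ε) (rectSet R))
    (hTsig : SetSignificant ((4 * (n : ℝ) - 2) * ε) (rectSet T))
    {i : Fin n} (hi : ¬∃ x ∈ R i, x + ε ∈ S i ∧ x + ε + ε ∈ T i) : alphaR T < alphaR R := by
  set δ := (4 * (n : ℝ) - 2) * ε
  set e : Set ℝ → ℝ := fun A => uDec (lowDec A) + uDec (highDec A)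
  have hle (j : Fin n) : e (T j) ≤ e (R j) + 4 * ε := by
    have := uDec_lowDec_le_add (by linarith) (hR j).1 (hRT j).2
      fun x hx => exists_le_add_of_isHomPair (hRS j) (hST j) hx
    have := uDec_highDec_le_add (by linarith) (hT j).1 (hRT j).1
      fun c hc => exists_ge_sub_of_isHomPair (hRS j) (hST j) hc
    simp only [e]
    linarith
  obtain ⟨r, hr, hrδ⟩ := hRsig
  obtain ⟨t, ht, htδ⟩ := hTsig
  have hlt : e (T i) < e (R i) + 4 * ε - 2 * δ := by
    have := uDec_lowDec_add_uDec_highDec_lt (hRT i).1 (hRT i).2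
      (fun c hc x hx => lt_add_of_isHomPair (hRS i) (hST i) (hT i).2 hi hc hx)
      (hr i) (hrδ i) (ht i) (htδ i)
    simp only [e]
    linarith
  have hsum : 2 * δ < ∑ j, (e (R j) + 4 * ε - e (T j)) :=
    (by linarith : 2 * δ < e (R i) + 4 * ε - e (T i)).trans_le
      (Finset.single_le_sum (f := fun j => e (R j) + 4 * ε - e (T j))
        (fun j _ => by linarith [hle j]) (Finset.mem_univ i))
  rw [Finset.sum_sub_distrib, Finset.sum_add_distrib, ← alphaR_eq_sum, ← alphaR_eq_sum,
    Finset.sum_const, Finset.card_univ, Fintype.card_fin, nsmul_eq_mul] at hsum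
  have hn : (1 : ℝ) ≤ n := Nat.one_le_cast.2 i.pos
  nlinarith [mul_nonneg (sub_nonneg.2 hn) hε]

theorem rect_nonzero_composite_general
    (k : Type) [Field k] {n : ℕ} (ε : ℝ) (hε : 0 ≤ ε) (R S T : Fin n → Set ℝ)
    (hR : IsRectFactors R) (hS : IsRectFactors S) (hT : IsRectFactors T)
    (hRT : SameType R T)
    (hRsig : SetSignificant ((4 * (n : ℝ) - 2) * ε) (rectSet R))
    (hTsig : SetSignificant ((4 * (n : ℝ) - 2) * ε) (rectSet T))
    (hα : alphaR R ≤ alphaR T)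
    (χ : intervalModule k (rectSet R) (rectSet_convex R fun i => (hR i).2) ⟶
      transl n ε ⋙ intervalModule k (rectSet S) (rectSet_convex S fun i => (hS i).2))
    (ψ : intervalModule k (rectSet S) (rectSet_convex S fun i => (hS i).2) ⟶
      transl n ε ⋙ intervalModule k (rectSet T) (rectSet_convex T fun i => (hT i).2))
    (hχ : χ ≠ 0) (hψ : ψ ≠ 0) :
    χ ≫ CategoryTheory.Functor.whiskerLeft (transl n ε) ψ ≠ 0 := by
  by_cases hpt : ∀ i, ∃ x ∈ R i, x + ε ∈ S i ∧ x + ε + ε ∈ T i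
  · choose p hpR hpS hpT using hpt
    intro h
    exact ModuleCat.comp_ne_zero_of_submodule_self (app_ne_zero_of_mem_rectSet hχ hpR hpS)
      (app_ne_zero_of_mem_rectSet hψ hpS hpT) (congrArg (fun φ => φ.app p) h)
  · obtain ⟨i, hi⟩ := not_forall.1 hpt
    exact absurd hα (alphaR_lt_of_isHomPair hε hR hT hRT (isHomPair_of_ne_zero hχ)
      (isHomPair_of_ne_zero hψ) hRsig hTsig hi).not_ge

/-- If `R`, `S`, `T` are rectangles of the same type, `R` and `T` are
`(4n−2)ε`-significant, and `α(R) ≤ α(T)`, then for nonzero morphisms `χ : 𝕀^R ⟶ 𝕀^S(ε)`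
and `ψ : 𝕀^S ⟶ 𝕀^T(ε)` the composite `ψ(ε) ∘ χ : 𝕀^R ⟶ 𝕀^T(2ε)` is nonzero. -/
theorem rect_nonzero_composite
    (k : Type) [Field k] {n : ℕ} (ε : ℝ) (hε : 0 ≤ ε) (R S T : Fin n → Set ℝ)
    (hR : IsRectFactors R) (hS : IsRectFactors S) (hT : IsRectFactors T)
    (hRS : SameType R S) (hST : SameType S T) (hRT : SameType R T)
    (hRsig : SetSignificant ((4 * (n : ℝ) - 2) * ε) (rectSet R))
    (hTsig : SetSignificant ((4 * (n : ℝ) - 2) * ε) (rectSet T))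
    (hα : alphaR R ≤ alphaR T)
    (χ : intervalModule k (rectSet R) (rectSet_convex R fun i => (hR i).2) ⟶
      transl n ε ⋙ intervalModule k (rectSet S) (rectSet_convex S fun i => (hS i).2))
    (ψ : intervalModule k (rectSet S) (rectSet_convex S fun i => (hS i).2) ⟶
      transl n ε ⋙ intervalModule k (rectSet T) (rectSet_convex T fun i => (hT i).2))
    (hχ : χ ≠ 0) (hψ : ψ ≠ 0) :
    χ ≫ CategoryTheory.Functor.whiskerLeft (transl n ε) ψ ≠ 0 :=
  rect_nonzero_composite_general k ε hε R S T hR hS hT hRT hRsig hTsig hα χ ψ hχ hψ
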